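/- The commutator [xᵐ, yⁿ] is a product of two squares in the free group F₂ = ⟨x,y⟩ if and only if mn is even. -/

import Mathlib

open scoped commutatorElement

/-- The free group on two generators. -/
abbrev F2 : Type := FreeGroup Bool

/-- The first generator. -/
def x : F2 := FreeGroup.of true
/-- The second generator. -/
def y : F2 := FreeGroup.of false

/-!
If `m` is even then `xᵐ = (x^(m/2))²` and `⁅a², b⁆ = a² (b a⁻¹ b⁻¹)²`, and symmetrically for `n`.
Conversely, map `F₂` to the integral Heisenberg group by `x ↦ (1,0,0)`, `y ↦ (0,1,0)`. There
`⁅xᵐ, yⁿ⁆` goes to the central element `(0,0,mn)`, while a product of two squares `a²b²` that is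
central has even central coordinate, because centrality forces `b ≡ a⁻¹` modulo the centre.
-/

section Group

variable {G : Type*} [Group G]

theorem commutatorElement_sq_left (a b : G) : ⁅a ^ 2, b⁆ = a ^ 2 * (b * a⁻¹ * b⁻¹) ^ 2 := by
  rw [commutatorElement_def, sq, sq]
  group

theorem commutatorElement_sq_right (a b : G) : ⁅a, b ^ 2⁆ = (a * b * a⁻¹) ^ 2 * b⁻¹ ^ 2 := by
  rw [commutatorElement_def, sq, sq, sq]
  group

theorem exists_commutatorElement_zpow_left_eq_sq_mul_sq (g h : G) {m : ℤ} (hm : Even m) :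
    ∃ a b : G, ⁅g ^ m, h⁆ = a ^ 2 * b ^ 2 := by
  obtain ⟨k, rfl⟩ := hm
  exact ⟨g ^ k, _, by rw [zpow_add, ← sq, commutatorElement_sq_left]⟩

theorem exists_commutatorElement_zpow_right_eq_sq_mul_sq (g h : G) {n : ℤ} (hn : Even n) :
    ∃ a b : G, ⁅g, h ^ n⁆ = a ^ 2 * b ^ 2 := by
  obtain ⟨k, rfl⟩ := hn
  exact ⟨_, _, by rw [zpow_add, ← sq, commutatorElement_sq_right]⟩

end Group

/-- `⟨a, b, c⟩` stands for the unitriangular matrix `[[1, a, c], [0, 1, b], [0, 0, 1]]`. -/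
@[ext]
structure Heisenberg (R : Type*) where
  a : R
  b : R
  c : R

namespace Heisenberg

variable {R : Type*} [CommRing R]

instance : Mul (Heisenberg R) := ⟨fun g h => ⟨g.a + h.a, g.b + h.b, g.c + h.c + g.a * h.b⟩⟩
instance : One (Heisenberg R) := ⟨⟨0, 0, 0⟩⟩
instance : Inv (Heisenberg R) := ⟨fun g => ⟨-g.a, -g.b, -g.c + g.a * g.b⟩⟩

@[simp] theorem mul_def (g h : Heisenberg R) :
    g * h = ⟨g.a + h.a, g.b + h.b, g.c + h.c + g.a * h.b⟩ := rfl
@[simp] theorem one_def : (1 : Heisenberg R) = ⟨0, 0, 0⟩ := rfl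
@[simp] theorem inv_def (g : Heisenberg R) : g⁻¹ = ⟨-g.a, -g.b, -g.c + g.a * g.b⟩ := rfl

instance : Group (Heisenberg R) where
  mul_assoc g h k := by ext <;> simp <;> ring
  one_mul g := by ext <;> simp
  mul_one g := by ext <;> simp
  inv_mul_cancel g := by ext <;> simp

def ofA : Multiplicative R →* Heisenberg R where
  toFun p := ⟨p.toAdd, 0, 0⟩
  map_one' := rfl
  map_mul' p q := by ext <;> simp

def ofB : Multiplicative R →* Heisenberg R where
  toFun q := ⟨0, q.toAdd, 0⟩
  map_one' := rfl
  map_mul' p q := by ext <;> simp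

theorem commutatorElement_ofA_ofB (p q : R) :
    ⁅ofA (.ofAdd p), ofB (.ofAdd q)⁆ = ⟨0, 0, p * q⟩ := by
  rw [commutatorElement_def]
  ext <;> simp [ofA, ofB]

theorem even_of_eq_sq_mul_sq [IsAddTorsionFree R] {g h : Heisenberg R} {z : R}
    (hz : (⟨0, 0, z⟩ : Heisenberg R) = g ^ 2 * h ^ 2) : Even z := by
  obtain ⟨p, q, r⟩ := g
  obtain ⟨s, t, u⟩ := h
  simp only [sq, mul_def, Heisenberg.mk.injEq] at hz
  obtain ⟨hps, hqt, rfl⟩ := hz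
  have hs : s = -p := by
    have : (2 : ℕ) • (p + s) = (2 : ℕ) • 0 := by rw [two_nsmul]; linear_combination -hps
    linear_combination nsmul_right_injective two_ne_zero this
  have ht : t = -q := by
    have : (2 : ℕ) • (q + t) = (2 : ℕ) • 0 := by rw [two_nsmul]; linear_combination -hqt
    linear_combination nsmul_right_injective two_ne_zero this
  subst hs ht
  exact ⟨r + u - p * q, by ring⟩

end Heisenberg

noncomputable def toHeisenberg : F2 →* Heisenberg ℤ :=
  FreeGroup.lift fun t => if t then Heisenberg.ofA (.ofAdd 1) else Heisenberg.ofB (.ofAdd 1)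

theorem toHeisenberg_x_zpow (m : ℤ) : toHeisenberg (x ^ m) = Heisenberg.ofA (.ofAdd m) := by
  rw [map_zpow, toHeisenberg, x, FreeGroup.lift_apply_of, if_pos rfl, ← map_zpow, ← ofAdd_zsmul,
    smul_eq_mul, mul_one]

theorem toHeisenberg_y_zpow (n : ℤ) : toHeisenberg (y ^ n) = Heisenberg.ofB (.ofAdd n) := by
  rw [map_zpow, toHeisenberg, y, FreeGroup.lift_apply_of, if_neg Bool.false_ne_true, ← map_zpow,
    ← ofAdd_zsmul, smul_eq_mul, mul_one]

/-- `⁅xᵐ, yⁿ⁆` is a product of two squares in the free group `F₂ = ⟨x,y⟩` iff `m*n` is even. -/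
theorem commutator_pow_prod_two_squares_iff (m n : ℤ) :
    (∃ a b : F2, ⁅x ^ m, y ^ n⁆ = a ^ 2 * b ^ 2) ↔ Even (m * n) := by
  constructor
  · rintro ⟨a, b, hab⟩
    have h := congrArg toHeisenberg hab
    rw [map_commutatorElement, toHeisenberg_x_zpow, toHeisenberg_y_zpow,
      Heisenberg.commutatorElement_ofA_ofB, map_mul, map_pow, map_pow] at h
    exact Heisenberg.even_of_eq_sq_mul_sq h
  · intro hmn
    rcases Int.even_mul.mp hmn with hm | hn
    · exact exists_commutatorElement_zpow_left_eq_sq_mul_sq x (y ^ n) hm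
    · exact exists_commutatorElement_zpow_right_eq_sq_mul_sq (x ^ m) y hn
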